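/- arXiv:1305.4549 — 9 statements merged into one kernel-verified Lean document; each statement's English description precedes it below -/
import Mathlib

section
/- Let K be a field of characteristic zero, let n ≥ 0, and let P(x) ∈ K[x] be a polynomial of degree at most n. Let A_P be the (n+1)×(n+1) matrix with entries (A_P)_{i,j} = P(j − i) for 0 ≤ i, j ≤ n. Then A_P is invertible if and only if P has degree exactly n (i.e. the coefficient of x^n in P is nonzero). -/
open Finset Polynomial Matrix

private lemma key_sum {K : Type*} [CommRing K] (n : ℕ) (P : Polynomial K)
    (hnd : P.natDegree ≤ n) (hc : ∀ m : ℕ, n < m → P.coeff m = 0) (x y : K) :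
    P.eval (x - y) = ∑ k ∈ range (n+1), (∑ d ∈ range (n+1),
      y ^ d * ((-1 : K) ^ d * (((d + k).choose k : ℕ) : K) * P.coeff (d + k))) * x ^ k := by
  rw [eval_eq_sum_range' (Nat.lt_succ_of_le hnd)]
  have expand : ∀ m ∈ range (n+1), P.coeff m * (x - y) ^ m
      = ∑ k ∈ range (n+1), P.coeff m * ((-1 : K)^(k+m) * x^k * y^(m-k) * (m.choose k : K)) := by
    intro m hm
    rw [mem_range] at hm
    rw [sub_pow, Finset.mul_sum]
    refine Finset.sum_subset (by intro t ht; simp only [mem_range] at *; omega) ?_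
    intro t ht htm
    simp only [mem_range, not_lt] at ht htm
    rw [Nat.choose_eq_zero_of_lt (by omega)]
    simp
  rw [Finset.sum_congr rfl expand, Finset.sum_comm]
  refine Finset.sum_congr rfl ?_
  intro k hk
  rw [mem_range] at hk
  rw [Finset.sum_mul]
  calc ∑ m ∈ range (n+1), P.coeff m * ((-1 : K)^(k+m) * x^k * y^(m-k) * (m.choose k : K))
      = ∑ m ∈ Finset.Ico k (n+1), P.coeff m * ((-1 : K)^(k+m) * x^k * y^(m-k) * (m.choose k : K)) := by
        refine (Finset.sum_subset ?_ ?_).symm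
        · intro t ht; simp only [Finset.mem_Ico, mem_range] at *; omega
        · intro t ht htm
          simp only [mem_range, Finset.mem_Ico, not_and, not_lt] at ht htm
          rw [Nat.choose_eq_zero_of_lt (by omega)]
          simp
    _ = ∑ d ∈ range (n+1-k), P.coeff (k+d) * ((-1 : K)^(k+(k+d)) * x^k * y^(k+d-k) * ((k+d).choose k : K)) :=
        by rw [Finset.sum_Ico_eq_sum_range]
    _ = ∑ d ∈ range (n+1-k), y ^ d * ((-1 : K) ^ d * (((d + k).choose k : ℕ) : K) * P.coeff (d + k)) * x ^ k := by
        refine Finset.sum_congr rfl fun d _ => ?_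
        have hp : (-1 : K)^(k+(k+d)) = (-1 : K)^d := by
          rw [show k + (k + d) = d + 2*k from by ring, pow_add, pow_mul, neg_one_sq, one_pow, mul_one]
        rw [hp, Nat.add_sub_cancel_left, Nat.add_comm k d]
        ring
    _ = ∑ d ∈ range (n+1), y ^ d * ((-1 : K) ^ d * (((d + k).choose k : ℕ) : K) * P.coeff (d + k)) * x ^ k := by
        refine Finset.sum_subset ?_ ?_
        · intro t ht; simp only [mem_range] at *; omega
        · intro t ht htm
          simp only [mem_range, not_lt] at ht htm
          rw [hc (t + k) (by omega)]
          simp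

/-- Let `K` be a field of characteristic zero, `n ≥ 0`, and
`P ∈ K[x]` a polynomial of degree at most `n`. Let `A_P` be the
`(n+1)×(n+1)` matrix with entries `(A_P)_{i,j} = P(j - i)`.
Then `A_P` is invertible if and only if `P` has degree exactly `n`,
i.e. the coefficient of `x^n` in `P` is nonzero. -/
theorem stmt_1 (K : Type*) [Field K] [CharZero K] (n : ℕ) (P : Polynomial K)
    (hP : P.degree ≤ n)
    (A : Matrix (Fin (n + 1)) (Fin (n + 1)) K)
    (hA : ∀ i j : Fin (n + 1), A i j = P.eval (((j : ℤ) - (i : ℤ) : ℤ) : K)) :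
    IsUnit A ↔ P.coeff n ≠ 0 := by
  classical
  have hnd : P.natDegree ≤ n := Polynomial.natDegree_le_iff_degree_le.mpr hP
  have hc : ∀ m : ℕ, n < m → P.coeff m = 0 := fun m hm =>
    Polynomial.coeff_eq_zero_of_degree_lt (lt_of_le_of_lt hP (by exact_mod_cast hm))
  set V : Matrix (Fin (n+1)) (Fin (n+1)) K :=
    Matrix.vandermonde (fun i : Fin (n+1) => ((i : ℕ) : K)) with hV
  set T : Matrix (Fin (n+1)) (Fin (n+1)) K :=
    Matrix.of (fun d k : Fin (n+1) =>
      (-1 : K) ^ (d : ℕ) * ((((d : ℕ) + (k : ℕ)).choose (k : ℕ) : ℕ) : K)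
        * P.coeff ((d : ℕ) + (k : ℕ))) with hT
  have hfac : A = V * T * Vᵀ := by
    ext i j
    rw [hA]
    have hcast : ((((j : ℤ) - (i : ℤ)) : ℤ) : K) = ((j : ℕ) : K) - ((i : ℕ) : K) := by
      push_cast; ring
    rw [hcast, key_sum n P hnd hc ((j : ℕ) : K) ((i : ℕ) : K)]
    simp only [Matrix.mul_apply, hV, hT, Matrix.transpose_apply, Matrix.vandermonde_apply,
      Matrix.of_apply, Finset.sum_mul]
    rw [← Fin.sum_univ_eq_sum_range (fun k => ∑ d ∈ range (n+1),
      ((i:ℕ):K) ^ d * ((-1 : K) ^ d * (((d + k).choose k : ℕ) : K) * P.coeff (d + k)) * ((j:ℕ):K) ^ k) (n+1)]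
    refine Finset.sum_congr rfl fun k _ => ?_
    rw [← Fin.sum_univ_eq_sum_range (fun d =>
      ((i:ℕ):K) ^ d * ((-1 : K) ^ d * (((d + (k:ℕ)).choose (k:ℕ) : ℕ) : K) * P.coeff (d + (k:ℕ))) * ((j:ℕ):K) ^ (k:ℕ)) (n+1)]
  have hdetV : V.det ≠ 0 := by
    rw [hV, Matrix.det_vandermonde_ne_zero_iff]
    intro a b hab
    exact Fin.ext (Nat.cast_injective hab)
  have htri : (T.submatrix (Fin.revPerm : Equiv.Perm (Fin (n+1))) id).BlockTriangular
      OrderDual.toDual := by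
    intro u k h
    have hlt : (u : ℕ) < (k : ℕ) := h
    have hk := k.isLt
    simp only [Matrix.submatrix_apply, hT, Matrix.of_apply, id_eq, Fin.revPerm_apply]
    rw [hc ((u.rev : ℕ) + (k : ℕ)) (by rw [Fin.val_rev]; omega)]
    ring
  have hsv : (((Equiv.Perm.sign (Fin.revPerm : Equiv.Perm (Fin (n+1)))) : ℤ) : K) ≠ 0 :=
    Int.cast_ne_zero.mpr (Units.ne_zero _)
  have hdT : (((Equiv.Perm.sign (Fin.revPerm : Equiv.Perm (Fin (n+1)))) : ℤ) : K) * T.det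
      = ∏ u : Fin (n+1), ((-1 : K) ^ (n - (u : ℕ)) * ((n.choose (u : ℕ) : ℕ) : K) * P.coeff n) := by
    rw [← Matrix.det_permute, Matrix.det_of_lowerTriangular _ htri]
    refine Finset.prod_congr rfl fun u _ => ?_
    have hu := u.isLt
    have h1 : ((u.rev : ℕ)) = n - (u : ℕ) := by rw [Fin.val_rev]; omega
    have h2 : ((u.rev : ℕ)) + (u : ℕ) = n := by rw [Fin.val_rev]; omega
    simp only [Matrix.submatrix_apply, hT, Matrix.of_apply, id_eq, Fin.revPerm_apply]
    rw [h2, h1]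
  rw [Matrix.isUnit_iff_isUnit_det, isUnit_iff_ne_zero, hfac, Matrix.det_mul, Matrix.det_mul,
    Matrix.det_transpose]
  constructor
  · intro h0 hc0
    apply h0
    have hprod : (((Equiv.Perm.sign (Fin.revPerm : Equiv.Perm (Fin (n+1)))) : ℤ) : K) * T.det = 0 := by
      rw [hdT]
      exact Finset.prod_eq_zero (Finset.mem_univ 0) (by rw [hc0]; ring)
    have hT0 : T.det = 0 := by
      rcases mul_eq_zero.mp hprod with h | h
      · exact absurd h hsv
      · exact h
    rw [hT0]
    ring
  · intro hc0 h0
    have hTne : T.det ≠ 0 := by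
      intro hT0
      have : (((Equiv.Perm.sign (Fin.revPerm : Equiv.Perm (Fin (n+1)))) : ℤ) : K) * T.det = 0 := by
        rw [hT0, mul_zero]
      rw [hdT] at this
      refine (Finset.prod_ne_zero_iff.mpr fun u _ => ?_) this
      have hu : (u : ℕ) ≤ n := Nat.lt_succ_iff.mp u.isLt
      exact mul_ne_zero (mul_ne_zero (pow_ne_zero _ (neg_ne_zero.mpr one_ne_zero))
        (Nat.cast_ne_zero.mpr (Nat.choose_pos hu).ne')) hc0
    exact (mul_ne_zero (mul_ne_zero hdetV hTne) hdetV) h0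
end

section
/- Let K be a field of characteristic zero, let n ≥ 0, and let P(x) ∈ K[x] be a polynomial of degree exactly n. Then the n+1 polynomials P(x), P(x+1), …, P(x+n) form a basis of the K-vector space of polynomials of degree ≤ n. -/
/-- Let `K` be a field of characteristic zero, `n ≥ 0`, and
`P ∈ K[x]` a polynomial of degree exactly `n`. Then the `n+1` polynomials
`P(x), P(x+1), …, P(x+n)` form a basis of the `K`-vector space of polynomials
of degree `≤ n`: they are linearly independent and span `degreeLE K n`. -/
theorem stmt_2 (K : Type*) [Field K] [CharZero K] (n : ℕ) (P : Polynomial K)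
    (hP : P.degree = n)
    (f : Fin (n + 1) → Polynomial K)
    (hf : ∀ k : Fin (n + 1), f k = P.comp (Polynomial.X + Polynomial.C ((k : ℕ) : K))) :
    LinearIndependent K f ∧
      Submodule.span K (Set.range f) = Polynomial.degreeLE K (n : ℕ) := by
  have hP0 : P ≠ 0 := fun h => by simp [h] at hP
  have hnd : P.natDegree = n := Polynomial.natDegree_eq_of_degree_eq_some hP
  have hlc : P.coeff n ≠ 0 := by
    rw [← hnd]; exact Polynomial.leadingCoeff_ne_zero.mpr hP0
  -- Taylor expansion: P(X + r) = ∑_j r^j * (hasseDeriv j P)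
  have key : ∀ r : K, P.comp (Polynomial.X + Polynomial.C r)
      = ∑ j ∈ Finset.range (n + 1), Polynomial.C (r ^ j) * Polynomial.hasseDeriv j P := by
    intro r
    rw [← Polynomial.taylor_apply]
    ext i
    have hdlt : (Polynomial.hasseDeriv i P).natDegree < n + 1 :=
      (Polynomial.natDegree_hasseDeriv_le P i).trans_lt (by rw [hnd]; omega)
    rw [Polynomial.taylor_coeff, Polynomial.eval_eq_sum_range' hdlt,
        Polynomial.finset_sum_coeff]
    refine Finset.sum_congr rfl fun j hj => ?_
    rw [Polynomial.coeff_C_mul, Polynomial.hasseDeriv_coeff, Polynomial.hasseDeriv_coeff,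
        add_comm j i, Nat.choose_symm_add]
    ring
  -- linear independence
  have hind : LinearIndependent K f := by
    rw [Fintype.linearIndependent_iff]
    intro g hg
    set a : ℕ → K := fun j => ∑ k : Fin (n + 1), g k * ((k : ℕ) : K) ^ j with ha
    have hrel : ∑ j ∈ Finset.range (n + 1),
        Polynomial.C (a j) * Polynomial.hasseDeriv j P = 0 := by
      rw [← hg]
      calc ∑ j ∈ Finset.range (n + 1), Polynomial.C (a j) * Polynomial.hasseDeriv j P
          = ∑ j ∈ Finset.range (n + 1), ∑ k : Fin (n + 1),
              Polynomial.C (g k * ((k : ℕ) : K) ^ j) * Polynomial.hasseDeriv j P := by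
            refine Finset.sum_congr rfl fun j _ => ?_
            rw [ha]; simp [map_sum, Finset.sum_mul]
        _ = ∑ k : Fin (n + 1), ∑ j ∈ Finset.range (n + 1),
              Polynomial.C (g k * ((k : ℕ) : K) ^ j) * Polynomial.hasseDeriv j P :=
            Finset.sum_comm
        _ = ∑ k, g k • f k := by
            refine Finset.sum_congr rfl fun k _ => ?_
            rw [hf k, key, Finset.smul_sum]
            refine Finset.sum_congr rfl fun j _ => ?_
            rw [Polynomial.smul_eq_C_mul, map_mul, mul_assoc]
    have haz : ∀ j, j ≤ n → a j = 0 := by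
      intro j
      induction j using Nat.strong_induction_on with
      | _ j IH =>
        intro hjn
        have hcoeff := congrArg (fun q => Polynomial.coeff q (n - j)) hrel
        simp only [Polynomial.finset_sum_coeff, Polynomial.coeff_C_mul,
          Polynomial.hasseDeriv_coeff, Polynomial.coeff_zero] at hcoeff
        rw [Finset.sum_eq_single j] at hcoeff
        · rw [Nat.sub_add_cancel hjn] at hcoeff
          have hch : ((n.choose j : ℕ) : K) ≠ 0 :=
            Nat.cast_ne_zero.mpr (Nat.choose_pos hjn).ne'
          exact (mul_eq_zero.mp hcoeff).resolve_right (mul_ne_zero hch hlc)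
        · intro i hi hij
          rcases lt_or_gt_of_ne hij with h | h
          · rw [IH i h (by omega), zero_mul]
          · rw [Polynomial.coeff_eq_zero_of_natDegree_lt (by rw [hnd]; omega), mul_zero,
              mul_zero]
        · intro hj
          exact absurd (Finset.mem_range.mpr (by omega)) hj
    have hg0 : g = 0 := by
      apply Matrix.eq_zero_of_forall_pow_sum_mul_pow_eq_zero
        (f := fun k : Fin (n + 1) => ((k : ℕ) : K))
      · intro k l hkl
        exact Fin.ext (Nat.cast_injective hkl)
      · intro i
        exact haz i (Nat.lt_succ_iff.mp i.isLt)
    exact fun i => congrFun hg0 i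
  -- membership in degreeLE
  have hmem : ∀ k, f k ∈ Polynomial.degreeLE K (n : ℕ) := by
    intro k
    rw [Polynomial.mem_degreeLE, hf k, ← Polynomial.taylor_apply]
    exact le_trans Polynomial.degree_le_natDegree
      (by rw [Polynomial.natDegree_taylor, hnd])
  refine ⟨hind, ?_⟩
  set W := Polynomial.degreeLE K (n : ℕ) with hW
  have e : W ≃ₗ[K] (Fin (n + 1) → K) :=
    (LinearEquiv.ofEq _ _ (Polynomial.degreeLT_succ_eq_degreeLE (R := K) (n := n)).symm).trans
      (Polynomial.degreeLTEquiv K (n + 1))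
  have hFD : FiniteDimensional K W := Module.Finite.equiv e.symm
  have hfr : Module.finrank K W = n + 1 := by
    rw [e.finrank_eq]; exact Module.finrank_fin_fun K
  set F : Fin (n + 1) → W := fun k => ⟨f k, hmem k⟩ with hFdef
  have hcomp : W.subtype ∘ F = f := rfl
  have hindF : LinearIndependent K F :=
    LinearIndependent.of_comp W.subtype (by rwa [hcomp])
  have hspanF : Submodule.span K (Set.range F) = ⊤ :=
    hindF.span_eq_top_of_card_eq_finrank (by simp [hfr])
  rw [← hcomp, Set.range_comp, ← Submodule.map_span, hspanF, Submodule.map_top,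
    Submodule.range_subtype]
end

section
/- Let P(x) = 1 + (25/8)·x·(x+1)·(3x² + 3x + 2) ∈ ℚ[x] (the Hilbert polynomial of a Wilson fourfold). Then the 5×5 matrix with entries P(j − i) for 0 ≤ i, j ≤ 4 has determinant 225⁵ = 15¹⁰. -/
open Matrix

theorem det_wilson_matrix :
    !![1, 51, 376, 1426, 3876; 1, 1, 51, 376, 1426; 51, 1, 1, 51, 376;
      376, 51, 1, 1, 51; 1426, 376, 51, 1, 1].det = (225 ^ 5 : ℚ) := by
  simp [det_succ_row_zero, Fin.sum_univ_succ, Fin.succAbove]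
  norm_num

/-- Let `P(x) = 1 + (25/8)·x·(x+1)·(3x² + 3x + 2) ∈ ℚ[x]`
(the Hilbert polynomial of a Wilson fourfold). Then the `5×5` matrix with entries
`P(j - i)` for `0 ≤ i, j ≤ 4` has determinant `225⁵ = 15¹⁰`. -/
theorem stmt_4 (P : Polynomial ℚ)
    (hP : P = 1 + Polynomial.C ((25 : ℚ) / 8) * Polynomial.X * (Polynomial.X + 1) *
      (3 * Polynomial.X ^ 2 + 3 * Polynomial.X + 2))
    (A : Matrix (Fin 5) (Fin 5) ℚ)
    (hA : ∀ i j : Fin 5, A i j = P.eval (((j : ℤ) - (i : ℤ) : ℤ) : ℚ)) :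
    A.det = 225 ^ 5 ∧ A.det = 15 ^ 10 := by
  -- `P (-1 - x) = P x`, so the entries below the diagonal repeat those above, shifted by one.
  have hA' : A = !![1, 51, 376, 1426, 3876; 1, 1, 51, 376, 1426; 51, 1, 1, 51, 376;
      376, 51, 1, 1, 51; 1426, 376, 51, 1, 1] := by
    ext i j
    fin_cases i <;> fin_cases j <;> norm_num [hA, hP]
  rw [hA', det_wilson_matrix]
  norm_num
end

section
/- Let Ā be the 5×5 matrix over F₂ = ℤ/2ℤ with rows (1,1,0,0,0), (1,1,1,0,0), (1,1,1,1,0), (0,1,1,1,1), (0,0,1,1,1), and let (u,v) = uᵀ Ā v be the associated bilinear form on V = F₂⁵. Then there is no basis e₁, e₂, e₃, e₄, e₅ of V such that (eᵢ, eⱼ) = 0 for all i > j and (eᵢ, eᵢ) = 1 for all i. -/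
/-!
A semi-orthonormal basis would in particular contain four vectors `v₀, …, v₃` with
`(vᵢ, vᵢ) = 1` and `(vᵢ, vⱼ) = 0` for `i > j`. Only twelve vectors of `F₂⁵` satisfy
`(v, v) = 1`, and an exhaustive search shows that no four of them can be so arranged.
-/

open Matrix

namespace Matrix

variable {R n ι κ : Type*} [CommRing R] [Fintype n] [LinearOrder ι] [LinearOrder κ]

def IsSemiOrthonormal (A : Matrix n n R) (v : ι → n → R) : Prop :=
  (∀ i j, j < i → v i ⬝ᵥ A *ᵥ v j = 0) ∧ ∀ i, v i ⬝ᵥ A *ᵥ v i = 1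

theorem IsSemiOrthonormal.comp_strictMono {A : Matrix n n R} {v : ι → n → R}
    (hv : A.IsSemiOrthonormal v) {f : κ → ι} (hf : StrictMono f) :
    A.IsSemiOrthonormal (v ∘ f) :=
  ⟨fun i j hji => hv.1 (f i) (f j) (hf hji), fun i => hv.2 (f i)⟩

end Matrix

abbrev Abar : Matrix (Fin 5) (Fin 5) (ZMod 2) :=
  !![1,1,0,0,0; 1,1,1,0,0; 1,1,1,1,0; 0,1,1,1,1; 0,0,1,1,1]

local notation "⟪" u ", " w "⟫" => u ⬝ᵥ Abar *ᵥ w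

-- Nesting the quantifiers lets `decide` prune as soon as one condition fails.
set_option synthInstance.maxSize 2000 in
set_option maxRecDepth 10000 in
theorem Abar_no_semiOrthonormal_quadruple :
    ∀ v₀ : Fin 5 → ZMod 2, ⟪v₀, v₀⟫ = 1 →
    ∀ v₁ : Fin 5 → ZMod 2, ⟪v₁, v₁⟫ = 1 → ⟪v₁, v₀⟫ = 0 →
    ∀ v₂ : Fin 5 → ZMod 2, ⟪v₂, v₂⟫ = 1 → ⟪v₂, v₀⟫ = 0 → ⟪v₂, v₁⟫ = 0 →
    ∀ v₃ : Fin 5 → ZMod 2, ⟪v₃, v₃⟫ = 1 → ⟪v₃, v₀⟫ = 0 → ⟪v₃, v₁⟫ = 0 → ⟪v₃, v₂⟫ = 0 →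
    False := by
  decide

theorem Abar_not_isSemiOrthonormal (v : Fin 4 → Fin 5 → ZMod 2) :
    ¬ Abar.IsSemiOrthonormal v := by
  rintro ⟨hlt, hdiag⟩
  exact Abar_no_semiOrthonormal_quadruple (v 0) (hdiag 0)
    (v 1) (hdiag 1) (hlt 1 0 (by decide))
    (v 2) (hdiag 2) (hlt 2 0 (by decide)) (hlt 2 1 (by decide))
    (v 3) (hdiag 3) (hlt 3 0 (by decide)) (hlt 3 1 (by decide)) (hlt 3 2 (by decide))

/-- Let `Ā` be the given `5×5` matrix over `F₂ = ℤ/2ℤ` and let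
`(u,v) = uᵀ Ā v` be the associated bilinear form on `V = F₂⁵`. Then there is no basis
`e₁, …, e₅` of `V` with `(eᵢ, eⱼ) = 0` for `i > j` and `(eᵢ, eᵢ) = 1` for all `i`. -/
theorem stmt_6 (A : Matrix (Fin 5) (Fin 5) (ZMod 2))
    (hA : A = !![1,1,0,0,0; 1,1,1,0,0; 1,1,1,1,0; 0,1,1,1,1; 0,0,1,1,1]) :
    ¬ ∃ e : Module.Basis (Fin 5) (ZMod 2) (Fin 5 → ZMod 2),
        (∀ i j : Fin 5, j < i → dotProduct (e i) (A.mulVec (e j)) = 0) ∧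
        (∀ i : Fin 5, dotProduct (e i) (A.mulVec (e i)) = 1) := by
  subst hA
  rintro ⟨e, hlt, hdiag⟩
  have he : Abar.IsSemiOrthonormal ⇑e := ⟨hlt, hdiag⟩
  exact Abar_not_isSemiOrthonormal _ (he.comp_strictMono (Fin.strictMono_castLE (by decide)))
end

section
/- Let Ā be the 5×5 matrix over F₂ = ℤ/2ℤ with rows (1,1,0,0,0), (1,1,1,0,0), (1,1,1,1,0), (0,1,1,1,1), (0,0,1,1,1). Then Ā is invertible, and the matrix S := Ā⁻¹ · Āᵀ satisfies Sᵀ Ā S = Ā (i.e. S preserves the bilinear form (u,v) = uᵀ Ā v) and S has order exactly 8 in GL(5, F₂), i.e. S⁸ = I and Sᵏ ≠ I for 1 ≤ k ≤ 7. -/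
/-- Let `Ā` be the given `5×5` matrix over `F₂ = ℤ/2ℤ`. Then `Ā` is
invertible, and `S := Ā⁻¹ · Āᵀ` satisfies `Sᵀ Ā S = Ā` (it preserves the bilinear form
`uᵀ Ā v`) and `S` has order exactly `8` in `GL(5, F₂)`: `S⁸ = 1` and `Sᵏ ≠ 1` for
`1 ≤ k ≤ 7`. -/
theorem stmt_7 (A : Matrix (Fin 5) (Fin 5) (ZMod 2))
    (hA : A = !![1,1,0,0,0; 1,1,1,0,0; 1,1,1,1,0; 0,1,1,1,1; 0,0,1,1,1])
    (S : Matrix (Fin 5) (Fin 5) (ZMod 2)) (hS : S = A⁻¹ * A.transpose) :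
    IsUnit A ∧ S.transpose * A * S = A ∧ S ^ 8 = 1 ∧
      ∀ k : ℕ, 1 ≤ k → k ≤ 7 → S ^ k ≠ 1 := by
  set B : Matrix (Fin 5) (Fin 5) (ZMod 2) :=
    !![1,0,0,1,1;0,0,0,1,1;1,1,0,0,0;0,1,1,0,0;1,0,1,0,1] with hB
  have hAB : A * B = 1 := by subst hA; decide
  have hBA : B * A = 1 := by subst hA; decide
  have hUnit : IsUnit A := ⟨⟨A, B, hAB, hBA⟩, rfl⟩
  have hInv : A⁻¹ = B := Matrix.inv_eq_right_inv hAB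
  have hS0 : S = !![1,1,0,0,0;0,0,1,0,0;0,0,0,1,0;1,0,0,0,1;1,0,0,0,0] := by
    rw [hS, hInv, hB, hA]; decide
  refine ⟨hUnit, by rw [hS0, hA]; decide, ?_, ?_⟩
  · rw [hS0]
    show _ = (1 : Matrix (Fin 5) (Fin 5) (ZMod 2))
    norm_num [pow_succ, pow_zero]
    decide
  · intro k h1 h7
    interval_cases k <;> rw [hS0] <;> norm_num [pow_succ, pow_zero] <;> decide
end

section
/- Let V be a finite-dimensional vector space over F₂ = ℤ/2ℤ equipped with a bilinear form (·,·), and let e₁, …, eₙ be a basis of V that is semi-orthonormal, i.e. (eᵢ, eⱼ) = 0 for i > j and (eᵢ, eᵢ) = 1. Then for each i with 1 ≤ i ≤ n−1, the family obtained from e₁, …, eₙ by replacing the pair (eᵢ, eᵢ₊₁) with the pair (eᵢ₊₁, eᵢ + (eᵢ, eᵢ₊₁)·eᵢ₊₁) is again a semi-orthonormal basis of V. -/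
/-!
Write `c = B(vᵢ, vⱼ)` and `w = vᵢ - c vⱼ`; this works over any commutative ring, and over `𝔽₂`
the minus sign is a plus. Since `B(vⱼ, vⱼ) = 1`, the vector `w` satisfies `B(w, vⱼ) = 0`, and
`B(w, w) = 1 - c·B(vⱼ, vᵢ) = 1`. All other pairings of the new family are pairings of old vectors
in the same order, or follow from them by bilinearity, because no index lies strictly between
the adjacent `i` and `j`. Finally `vⱼ` and `vᵢ = w + c vⱼ` lie in the span of the new family, so it
is a spanning family of `rank` many vectors, hence a basis.
-/

section SemiOrthonormal

open Submodule

variable {R M ι : Type*} [CommRing R] [AddCommGroup M] [Module R M]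

structure IsSemiOrthonormal [LinearOrder ι] (B : M →ₗ[R] M →ₗ[R] R) (v : ι → M) : Prop where
  apply_eq_zero_of_lt : ∀ ⦃i j⦄, j < i → B (v i) (v j) = 0
  apply_self : ∀ i, B (v i) (v i) = 1

namespace LinearMap

variable (B : M →ₗ[R] M →ₗ[R] R) {x y z : M}

theorem apply_sub_smul_apply_right_eq_zero (hy : B y y = 1) : B (x - B x y • y) y = 0 := by
  simp [hy]

theorem apply_sub_smul_apply_self (hx : B x x = 1) (hy : B y y = 1) (hyx : B y x = 0) :
    B (x - B x y • y) (x - B x y • y) = 1 := by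
  simp only [map_sub, map_smul, sub_apply, smul_apply, smul_eq_mul, hx, hy, hyx]
  ring

theorem apply_sub_smul_eq_zero_left (c : R) (hx : B x z = 0) (hy : B y z = 0) :
    B (x - c • y) z = 0 := by
  simp [hx, hy]

theorem apply_sub_smul_eq_zero_right (c : R) (hx : B z x = 0) (hy : B z y = 0) :
    B z (x - c • y) = 0 := by
  simp [hx, hy]

end LinearMap

section Mutate

variable [DecidableEq ι] (B : M →ₗ[R] M →ₗ[R] R) (v : ι → M)

def mutate (i j k : ι) : M :=
  if k = i then v j else if k = j then v i - B (v i) (v j) • v j else v k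

variable {i j k : ι}

theorem mutate_left : mutate B v i j i = v j := if_pos rfl

theorem mutate_right (hij : i ≠ j) : mutate B v i j j = v i - B (v i) (v j) • v j := by
  rw [mutate, if_neg hij.symm, if_pos rfl]

theorem mutate_of_ne (hki : k ≠ i) (hkj : k ≠ j) : mutate B v i j k = v k := by
  rw [mutate, if_neg hki, if_neg hkj]

theorem span_range_le_span_range_mutate (hij : i ≠ j) :
    span R (Set.range v) ≤ span R (Set.range (mutate B v i j)) := by
  have mem : ∀ l, mutate B v i j l ∈ span R (Set.range (mutate B v i j)) :=
    fun l => subset_span ⟨l, rfl⟩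
  rw [span_le]
  rintro _ ⟨k, rfl⟩
  by_cases hki : k = i
  · subst hki
    have hv : v k = mutate B v k j j + B (v k) (v j) • mutate B v k j k := by
      rw [mutate_right B v hij, mutate_left, sub_add_cancel]
    rw [hv]
    exact add_mem (mem j) (smul_mem _ _ (mem k))
  by_cases hkj : k = j
  · subst hkj
    simpa only [mutate_left, SetLike.mem_coe] using mem i
  · simpa only [mutate_of_ne B v hki hkj, SetLike.mem_coe] using mem k

noncomputable def Module.Basis.mutate [Nontrivial R] [Fintype ι] (b : Module.Basis ι R M)
    (hij : i ≠ j) : Module.Basis ι R M :=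
  basisOfTopLeSpanOfCardEqFinrank (_root_.mutate B b i j)
    (b.span_eq ▸ span_range_le_span_range_mutate B b hij) (Module.finrank_eq_card_basis b).symm

@[simp]
theorem Module.Basis.coe_mutate [Nontrivial R] [Fintype ι] (b : Module.Basis ι R M)
    (hij : i ≠ j) : ⇑(b.mutate B hij) = _root_.mutate B b i j :=
  coe_basisOfTopLeSpanOfCardEqFinrank _ _ _

end Mutate

namespace IsSemiOrthonormal

variable [LinearOrder ι] {B : M →ₗ[R] M →ₗ[R] R} {v : ι → M} {i j : ι}

theorem mutate_apply_self (hv : IsSemiOrthonormal B v) (hij : i ⋖ j) (k : ι) :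
    B (mutate B v i j k) (mutate B v i j k) = 1 := by
  by_cases hki : k = i
  · rw [hki, mutate_left]
    exact hv.apply_self j
  by_cases hkj : k = j
  · rw [hkj, mutate_right B v hij.lt.ne]
    exact B.apply_sub_smul_apply_self (hv.apply_self i) (hv.apply_self j)
      (hv.apply_eq_zero_of_lt hij.lt)
  · rw [mutate_of_ne B v hki hkj]
    exact hv.apply_self k

theorem mutate_apply_eq_zero_of_lt (hv : IsSemiOrthonormal B v) (hij : i ⋖ j) {k l : ι}
    (hkl : k < l) :
    B (mutate B v i j l) (mutate B v i j k) = 0 := by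
  by_cases hli : l = i
  · subst hli
    rw [mutate_left, mutate_of_ne B v hkl.ne (hkl.trans hij.lt).ne]
    exact hv.apply_eq_zero_of_lt (hkl.trans hij.lt)
  by_cases hlj : l = j
  · subst hlj
    rw [mutate_right B v hij.lt.ne]
    rcases (hij.le_of_lt hkl).eq_or_lt with rfl | hki
    · rw [mutate_left]
      exact B.apply_sub_smul_apply_right_eq_zero (hv.apply_self l)
    · rw [mutate_of_ne B v hki.ne hkl.ne]
      exact B.apply_sub_smul_eq_zero_left _ (hv.apply_eq_zero_of_lt hki)
        (hv.apply_eq_zero_of_lt hkl)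
  rw [mutate_of_ne B v hli hlj]
  by_cases hki : k = i
  · subst hki
    rw [mutate_left]
    exact hv.apply_eq_zero_of_lt ((hij.ge_of_gt hkl).lt_of_ne' hlj)
  by_cases hkj : k = j
  · subst hkj
    rw [mutate_right B v hij.lt.ne]
    exact B.apply_sub_smul_eq_zero_right _ (hv.apply_eq_zero_of_lt (hij.lt.trans hkl))
      (hv.apply_eq_zero_of_lt hkl)
  · rw [mutate_of_ne B v hki hkj]
    exact hv.apply_eq_zero_of_lt hkl

protected theorem mutate (hv : IsSemiOrthonormal B v) (hij : i ⋖ j) :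
    IsSemiOrthonormal B (mutate B v i j) :=
  ⟨fun _ _ => hv.mutate_apply_eq_zero_of_lt hij, hv.mutate_apply_self hij⟩

end IsSemiOrthonormal

end SemiOrthonormal

theorem stmt_10_general (V : Type*) [AddCommGroup V] [Module (ZMod 2) V] (n : ℕ)
    (B : V →ₗ[ZMod 2] V →ₗ[ZMod 2] ZMod 2)
    (e : Module.Basis (Fin n) (ZMod 2) V)
    (horth : ∀ i j : Fin n, j < i → B (e i) (e j) = 0)
    (hnorm : ∀ i : Fin n, B (e i) (e i) = 1)
    (i : ℕ) (hi : i + 1 < n)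
    (f : Fin n → V)
    (hf : ∀ j : Fin n, f j =
      if (j : ℕ) = i then e ⟨i + 1, hi⟩
      else if (j : ℕ) = i + 1 then
        e ⟨i, Nat.lt_of_succ_lt hi⟩ +
          B (e ⟨i, Nat.lt_of_succ_lt hi⟩) (e ⟨i + 1, hi⟩) • e ⟨i + 1, hi⟩
      else e j) :
    (∃ b : Module.Basis (Fin n) (ZMod 2) V, ⇑b = f) ∧
      (∀ j k : Fin n, k < j → B (f j) (f k) = 0) ∧
      (∀ j : Fin n, B (f j) (f j) = 1) := by
  have hcov : (⟨i, Nat.lt_of_succ_lt hi⟩ : Fin n) ⋖ ⟨i + 1, hi⟩ := by simp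
  have hf_eq : f = mutate B e ⟨i, Nat.lt_of_succ_lt hi⟩ ⟨i + 1, hi⟩ := by
    funext j
    rw [hf, mutate, sub_eq_add_neg, ← neg_smul, ZMod.neg_eq_self_mod_two]
    simp only [Fin.ext_iff]
  have hmut := IsSemiOrthonormal.mutate ⟨horth, hnorm⟩ hcov
  subst hf_eq
  exact ⟨⟨e.mutate B hcov.lt.ne, e.coe_mutate B _⟩, hmut.apply_eq_zero_of_lt, hmut.apply_self⟩

/-- Let `V` be a finite-dimensional vector space over `F₂ = ℤ/2ℤ` with
a bilinear form `B`, and let `e₁, …, eₙ` be a semi-orthonormal basis of `V`, i.e.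
`B(eᵢ, eⱼ) = 0` for `i > j` and `B(eᵢ, eᵢ) = 1`. Then for each `i` with
`1 ≤ i ≤ n − 1`, the family obtained by replacing the pair `(eᵢ, eᵢ₊₁)` with the pair
`(eᵢ₊₁, eᵢ + B(eᵢ, eᵢ₊₁)·eᵢ₊₁)` is again a semi-orthonormal basis of `V`. -/
theorem stmt_10 (V : Type*) [AddCommGroup V] [Module (ZMod 2) V]
    [FiniteDimensional (ZMod 2) V] (n : ℕ)
    (B : V →ₗ[ZMod 2] V →ₗ[ZMod 2] ZMod 2)
    (e : Module.Basis (Fin n) (ZMod 2) V)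
    (horth : ∀ i j : Fin n, j < i → B (e i) (e j) = 0)
    (hnorm : ∀ i : Fin n, B (e i) (e i) = 1)
    (i : ℕ) (hi : i + 1 < n)
    (f : Fin n → V)
    (hf : ∀ j : Fin n, f j =
      if (j : ℕ) = i then e ⟨i + 1, hi⟩
      else if (j : ℕ) = i + 1 then
        e ⟨i, Nat.lt_of_succ_lt hi⟩ +
          B (e ⟨i, Nat.lt_of_succ_lt hi⟩) (e ⟨i + 1, hi⟩) • e ⟨i + 1, hi⟩
      else e j) :
    (∃ b : Module.Basis (Fin n) (ZMod 2) V, ⇑b = f) ∧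
      (∀ j k : Fin n, k < j → B (f j) (f k) = 0) ∧
      (∀ j : Fin n, B (f j) (f j) = 1) :=
  stmt_10_general V n B e horth hnorm i hi f hf
end

section
/- Let α, β ∈ ℂ satisfy α⁷ = β⁷ = 1, α ≠ 1 and β ≠ 1. Then 1/((1−α)(1−β)) + 1/((1−α²)(1−β²)) + 1/((1−α⁴)(1−β⁴)) = 1 if and only if β = α³ or α = β³. -/
/-!
Write `β = α ^ i` with `α` a primitive 7th root of unity. For `i = 1, 2, 3, 6` the sum evaluates
to `η`, `1 + η`, `1`, `2`, where `η = α + α² + α⁴` is a Gauss period, a root of `η² + η + 2`;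
as the sum is symmetric in `α` and `β`, the cases `i = 4, 5` are the cases `i = 2, 3` for the
primitive root `β`. Since `η ∉ {0, 1}`, the sum equals `1` exactly for `i = 3, 5`.
-/

variable {K : Type*} [Field K]

def lefschetzSum (α β : K) : K :=
  1 / ((1 - α) * (1 - β)) + 1 / ((1 - α ^ 2) * (1 - β ^ 2)) + 1 / ((1 - α ^ 4) * (1 - β ^ 4))

theorem lefschetzSum_comm (α β : K) : lefschetzSum α β = lefschetzSum β α := by
  simp only [lefschetzSum, mul_comm]

namespace IsPrimitiveRoot

variable {ζ : K} {k : ℕ}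

theorem one_sub_pow_ne_zero (hζ : IsPrimitiveRoot ζ k) {l : ℕ} (hl : ¬k ∣ l) : 1 - ζ ^ l ≠ 0 :=
  sub_ne_zero.mpr fun h ↦ hl ((hζ.pow_eq_one_iff_dvd l).mp h.symm)

theorem pow_eq_pow_iff_modEq (hζ : IsPrimitiveRoot ζ k) (hk : k ≠ 0) {a b : ℕ} :
    ζ ^ a = ζ ^ b ↔ a ≡ b [MOD k] := by
  rw [(hζ.isOfFinOrder hk).pow_eq_pow_iff_modEq, ← hζ.eq_orderOf]

theorem lefschetzSum_eq_iff {α β v : K} (hα : IsPrimitiveRoot α 7) (hβ : IsPrimitiveRoot β 7) :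
    lefschetzSum α β = v ↔
      (1 - α ^ 2) * (1 - β ^ 2) * ((1 - α ^ 4) * (1 - β ^ 4)) +
          (1 - α) * (1 - β) * ((1 - α ^ 4) * (1 - β ^ 4)) +
          (1 - α) * (1 - β) * ((1 - α ^ 2) * (1 - β ^ 2)) =
        v * ((1 - α) * (1 - β) * ((1 - α ^ 2) * (1 - β ^ 2)) * ((1 - α ^ 4) * (1 - β ^ 4))) := by
  have hne {l : ℕ} (hl : ¬7 ∣ l) : (1 - α ^ l) * (1 - β ^ l) ≠ 0 :=
    mul_ne_zero (hα.one_sub_pow_ne_zero hl) (hβ.one_sub_pow_ne_zero hl)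
  have h₁ : (1 - α) * (1 - β) ≠ 0 := by simpa using hne (l := 1) (by norm_num)
  have h₂ := hne (l := 2) (by norm_num)
  have h₄ := hne (l := 4) (by norm_num)
  rw [lefschetzSum, div_add_div _ _ h₁ h₂, div_add_div _ _ (mul_ne_zero h₁ h₂) h₄,
    div_eq_iff (mul_ne_zero (mul_ne_zero h₁ h₂) h₄)]
  constructor <;> intro h <;> linear_combination h

variable (hζ : IsPrimitiveRoot ζ 7)
include hζ

theorem cyclotomic_seven : ζ ^ 6 + ζ ^ 5 + ζ ^ 4 + ζ ^ 3 + ζ ^ 2 + ζ + 1 = 0 := by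
  simpa [Finset.sum_range_succ, add_comm, add_left_comm, add_assoc] using
    hζ.geom_sum_eq_zero (by norm_num)

theorem gaussPeriod_sq_add_self_add_two :
    (ζ + ζ ^ 2 + ζ ^ 4) ^ 2 + (ζ + ζ ^ 2 + ζ ^ 4) + 2 = 0 := by
  linear_combination 2 * hζ.cyclotomic_seven + ζ * hζ.pow_eq_one

theorem gaussPeriod_ne_zero [NeZero (2 : K)] : ζ + ζ ^ 2 + ζ ^ 4 ≠ 0 := fun h ↦
  (two_ne_zero : (2 : K) ≠ 0)
    (by linear_combination hζ.gaussPeriod_sq_add_self_add_two - (ζ + ζ ^ 2 + ζ ^ 4 + 1) * h)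

theorem gaussPeriod_ne_one [NeZero (2 : K)] : ζ + ζ ^ 2 + ζ ^ 4 ≠ 1 := fun h ↦
  mul_self_ne_zero.mpr (two_ne_zero : (2 : K) ≠ 0)
    (by linear_combination hζ.gaussPeriod_sq_add_self_add_two - (ζ + ζ ^ 2 + ζ ^ 4 + 2) * h)

theorem lefschetzSum_self : lefschetzSum ζ ζ = ζ + ζ ^ 2 + ζ ^ 4 :=
  (lefschetzSum_eq_iff hζ hζ).mpr (by grind [hζ.cyclotomic_seven])

theorem lefschetzSum_pow_two : lefschetzSum ζ (ζ ^ 2) = 1 + (ζ + ζ ^ 2 + ζ ^ 4) :=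
  (lefschetzSum_eq_iff hζ (hζ.pow_of_coprime 2 (by norm_num))).mpr
    (by grind [hζ.cyclotomic_seven])

theorem lefschetzSum_pow_three : lefschetzSum ζ (ζ ^ 3) = 1 :=
  (lefschetzSum_eq_iff hζ (hζ.pow_of_coprime 3 (by norm_num))).mpr
    (by grind [hζ.cyclotomic_seven])

theorem lefschetzSum_pow_six : lefschetzSum ζ (ζ ^ 6) = 2 :=
  (lefschetzSum_eq_iff hζ (hζ.pow_of_coprime 6 (by norm_num))).mpr
    (by grind [hζ.cyclotomic_seven])

theorem lefschetzSum_pow_four : lefschetzSum ζ (ζ ^ 4) = 1 + (ζ + ζ ^ 2 + ζ ^ 4) := by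
  have hsq : (ζ ^ 4) ^ 2 = ζ := by linear_combination ζ * hζ.pow_eq_one
  calc lefschetzSum ζ (ζ ^ 4) = lefschetzSum (ζ ^ 4) ((ζ ^ 4) ^ 2) := by
        rw [hsq, lefschetzSum_comm]
    _ = 1 + (ζ ^ 4 + (ζ ^ 4) ^ 2 + (ζ ^ 4) ^ 4) :=
        (hζ.pow_of_coprime 4 (by norm_num)).lefschetzSum_pow_two
    _ = 1 + (ζ + ζ ^ 2 + ζ ^ 4) := by
        linear_combination (ζ + ζ ^ 2 * (ζ ^ 7 + 1)) * hζ.pow_eq_one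

theorem lefschetzSum_pow_five : lefschetzSum ζ (ζ ^ 5) = 1 := by
  have hcube : (ζ ^ 5) ^ 3 = ζ := by linear_combination ζ * (ζ ^ 7 + 1) * hζ.pow_eq_one
  calc lefschetzSum ζ (ζ ^ 5) = lefschetzSum (ζ ^ 5) ((ζ ^ 5) ^ 3) := by
        rw [hcube, lefschetzSum_comm]
    _ = 1 := (hζ.pow_of_coprime 5 (by norm_num)).lefschetzSum_pow_three

theorem lefschetzSum_pow_eq_one_iff [NeZero (2 : K)] {i : ℕ} (hi0 : 0 < i) (hi : i < 7) :
    lefschetzSum ζ (ζ ^ i) = 1 ↔ ζ ^ i = ζ ^ 3 ∨ ζ = (ζ ^ i) ^ 3 := by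
  have hpow {a b : ℕ} := hζ.pow_eq_pow_iff_modEq (a := a) (b := b) (by norm_num)
  have hcube : ζ = (ζ ^ i) ^ 3 ↔ 1 ≡ i * 3 [MOD 7] := by rw [← pow_mul, ← hpow, pow_one]
  rw [hpow, hcube]
  interval_cases i
  · rw [pow_one, hζ.lefschetzSum_self]
    exact iff_of_false hζ.gaussPeriod_ne_one (by decide)
  · rw [hζ.lefschetzSum_pow_two]
    exact iff_of_false (by simpa using hζ.gaussPeriod_ne_zero) (by decide)
  · exact iff_of_true hζ.lefschetzSum_pow_three (by decide)
  · rw [hζ.lefschetzSum_pow_four]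
    exact iff_of_false (by simpa using hζ.gaussPeriod_ne_zero) (by decide)
  · exact iff_of_true hζ.lefschetzSum_pow_five (by decide)
  · rw [hζ.lefschetzSum_pow_six]
    exact iff_of_false (fun h ↦ one_ne_zero (by linear_combination h)) (by decide)

end IsPrimitiveRoot

/-- Let `α, β ∈ ℂ` satisfy `α⁷ = β⁷ = 1`, `α ≠ 1`, `β ≠ 1`. Then
`1/((1−α)(1−β)) + 1/((1−α²)(1−β²)) + 1/((1−α⁴)(1−β⁴)) = 1`
if and only if `β = α³` or `α = β³`. -/
theorem stmt_16 (α β : ℂ) (hα7 : α ^ 7 = 1) (hβ7 : β ^ 7 = 1)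
    (hα : α ≠ 1) (hβ : β ≠ 1) :
    1 / ((1 - α) * (1 - β)) + 1 / ((1 - α ^ 2) * (1 - β ^ 2)) +
        1 / ((1 - α ^ 4) * (1 - β ^ 4)) = 1 ↔
      β = α ^ 3 ∨ α = β ^ 3 := by
  have : Fact (Nat.Prime 7) := ⟨by norm_num⟩
  have hα' : IsPrimitiveRoot α 7 := IsPrimitiveRoot.iff_orderOf.mpr (orderOf_eq_prime hα7 hα)
  obtain ⟨i, hi, rfl⟩ := hα'.eq_pow_of_pow_eq_one hβ7
  have hi0 : 0 < i := Nat.pos_of_ne_zero fun h ↦ hβ (by rw [h, pow_zero])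
  exact hα'.lefschetzSum_pow_eq_one_iff hi0 hi
end

section
/- Let ζ = exp(2πi/7) ∈ ℂ. Then ζ³/((1−ζ)(1−ζ³)) + ζ⁶/((1−ζ²)(1−ζ⁶)) + ζ⁵/((1−ζ⁴)(1−ζ⁵)) = ζ³ + ζ⁵ + ζ⁶ = (−1 − i√7)/2. -/
open Complex in
/-- Let `ζ = exp(2πi/7)`. Then
`ζ³/((1−ζ)(1−ζ³)) + ζ⁶/((1−ζ²)(1−ζ⁶)) + ζ⁵/((1−ζ⁴)(1−ζ⁵)) = ζ³ + ζ⁵ + ζ⁶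
= (−1 − i√7)/2`. -/
theorem stmt_17 (ζ : ℂ) (hζ : ζ = Complex.exp (2 * Real.pi * Complex.I / 7)) :
    ζ ^ 3 / ((1 - ζ) * (1 - ζ ^ 3)) + ζ ^ 6 / ((1 - ζ ^ 2) * (1 - ζ ^ 6)) +
        ζ ^ 5 / ((1 - ζ ^ 4) * (1 - ζ ^ 5)) = ζ ^ 3 + ζ ^ 5 + ζ ^ 6 ∧
      ζ ^ 3 + ζ ^ 5 + ζ ^ 6 = (-1 - Complex.I * Real.sqrt 7) / 2 := by
  have hpi := Real.pi_pos
  have h7 : ζ ^ 7 = 1 := by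
    rw [hζ, ← Complex.exp_nat_mul,
      show (7:ℕ) * (2 * ↑Real.pi * Complex.I / 7) = 2 * ↑Real.pi * Complex.I by push_cast; ring]
    exact Complex.exp_two_pi_mul_I
  have him : ∀ k : ℕ, (ζ ^ k).im = Real.sin (2 * Real.pi * k / 7) := by
    intro k
    rw [hζ, ← Complex.exp_nat_mul,
      show (k:ℂ) * (2 * ↑Real.pi * Complex.I / 7) = ((2 * Real.pi * k / 7 : ℝ) : ℂ) * Complex.I by
        push_cast; ring,
      Complex.exp_ofReal_mul_I_im]
  have hne : ∀ k : ℕ, 0 < k → k < 7 → 1 - ζ ^ k ≠ 0 := by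
    intro k hk0 hk7 h
    have h0 : ζ ^ k = 1 := by
      have := sub_eq_zero.mp h
      linear_combination -this
    have hs : Real.sin (2 * Real.pi * k / 7) = 0 := by
      rw [← him k, h0]; rfl
    rw [Real.sin_eq_zero_iff] at hs
    obtain ⟨n, hn⟩ := hs
    have h2 : (7 * n : ℝ) = 2 * k := by
      have hpine : Real.pi ≠ 0 := ne_of_gt hpi
      field_simp at hn
      nlinarith [hn]
    have h3 : (7 * n : ℤ) = 2 * k := by exact_mod_cast h2
    omega
  have h1 : (1 : ℂ) - ζ ≠ 0 := by simpa using hne 1 one_pos (by norm_num)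
  have h2 := hne 2 (by norm_num) (by norm_num)
  have h3 := hne 3 (by norm_num) (by norm_num)
  have h4 := hne 4 (by norm_num) (by norm_num)
  have h5 := hne 5 (by norm_num) (by norm_num)
  have h6 := hne 6 (by norm_num) (by norm_num)
  have hsum : ζ^6 + ζ^5 + ζ^4 + ζ^3 + ζ^2 + ζ + 1 = 0 := by
    have hz : (1 - ζ) * (ζ^6 + ζ^5 + ζ^4 + ζ^3 + ζ^2 + ζ + 1) = 0 := by
      linear_combination -h7
    exact (mul_eq_zero.mp hz).resolve_left h1
  constructor
  · field_simp
    linear_combination (ζ^4 - ζ^5 - ζ^7 + ζ^9 - ζ^10 + 3*ζ^12 - ζ^14 - ζ^15 - ζ^16 + ζ^17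
      - 2*ζ^18 + 2*ζ^19 + ζ^20 - ζ^21) * hsum
  · -- s^2 + s + 2 = 0
    have hq : (ζ^3 + ζ^5 + ζ^6)^2 + (ζ^3 + ζ^5 + ζ^6) + 2 = 0 := by
      linear_combination (ζ^5 + ζ^3 + 2*ζ^4 + 2*ζ^2 + 2*ζ) * h7 + 2 * hsum
    have hI : (Complex.I * (Real.sqrt 7 : ℂ))^2 = -7 := by
      rw [mul_pow, Complex.I_sq, ← Complex.ofReal_pow, Real.sq_sqrt (by norm_num : (7:ℝ) ≥ 0)]
      norm_num
    have hfac : (ζ^3 + ζ^5 + ζ^6 - (-1 - Complex.I * Real.sqrt 7) / 2) *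
        (ζ^3 + ζ^5 + ζ^6 - (-1 + Complex.I * Real.sqrt 7) / 2) = 0 := by
      linear_combination hq - (1/4) * hI
    have himS : (ζ^3 + ζ^5 + ζ^6).im < 0 := by
      have e3 := him 3
      have e5 := him 5
      have e6 := him 6
      have a3 : Real.sin (2 * Real.pi * (3:ℕ) / 7) = Real.sin (Real.pi / 7) := by
        rw [show 2 * Real.pi * (3:ℕ) / 7 = Real.pi - Real.pi / 7 by push_cast; ring,
          Real.sin_pi_sub]
      have a5 : Real.sin (2 * Real.pi * (5:ℕ) / 7) = -Real.sin (3 * Real.pi / 7) := by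
        rw [show 2 * Real.pi * (5:ℕ) / 7 = 3 * Real.pi / 7 + Real.pi by push_cast; ring,
          Real.sin_add_pi]
      have a6 : Real.sin (2 * Real.pi * (6:ℕ) / 7) = -Real.sin (2 * Real.pi / 7) := by
        rw [show 2 * Real.pi * (6:ℕ) / 7 = (Real.pi - 2 * Real.pi / 7) + Real.pi by push_cast; ring,
          Real.sin_add_pi, Real.sin_pi_sub]
      have m1 : Real.sin (Real.pi / 7) < Real.sin (3 * Real.pi / 7) := by
        apply Real.sin_lt_sin_of_lt_of_le_pi_div_two (by linarith) (by linarith) (by linarith)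
      have m2 : 0 < Real.sin (2 * Real.pi / 7) :=
        Real.sin_pos_of_pos_of_lt_pi (by linarith) (by linarith)
      have : (ζ^3 + ζ^5 + ζ^6).im =
          Real.sin (Real.pi / 7) - Real.sin (3 * Real.pi / 7) - Real.sin (2 * Real.pi / 7) := by
        rw [Complex.add_im, Complex.add_im, e3, e5, e6, a3, a5, a6]; ring
      rw [this]; linarith
    rcases mul_eq_zero.mp hfac with h | h
    · exact sub_eq_zero.mp h
    · exfalso
      have hs7 : (0:ℝ) < Real.sqrt 7 := Real.sqrt_pos.mpr (by norm_num)
      have heq := sub_eq_zero.mp h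
      have : (ζ^3 + ζ^5 + ζ^6).im = Real.sqrt 7 / 2 := by
        rw [heq]
        simp
      linarith [himS, this ▸ himS]
end

section
/- Let R be a commutative ring whose additive group has no p-torsion for a prime p (i.e. for all x ∈ R, p·x = 0 implies x = 0). If N ∈ R is nilpotent and (1 + N)^p = 1, then N = 0. -/
lemma aux_pow_expand {R : Type*} [CommRing R] (x : R) (n : ℕ) :
    ∃ c : R, (1 + x) ^ n = 1 + n • x + x ^ 2 * c := by
  induction n with
  | zero => exact ⟨0, by ring⟩
  | succ m ih =>
    obtain ⟨c, hc⟩ := ih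
    refine ⟨(m : R) + c + c * x, ?_⟩
    rw [pow_succ, hc]
    push_cast [succ_nsmul, nsmul_eq_mul]
    ring

/-- Let `R` be a commutative ring whose additive group has no
`p`-torsion for a prime `p` (for all `x ∈ R`, `p·x = 0` implies `x = 0`). If `N ∈ R`
is nilpotent and `(1 + N)^p = 1`, then `N = 0`. -/
theorem stmt_18 (R : Type*) [CommRing R] (p : ℕ) (hp : p.Prime)
    (htor : ∀ x : R, (p : ℕ) • x = 0 → x = 0)
    (N : R) (hN : IsNilpotent N) (h : (1 + N) ^ p = 1) :
    N = 0 := by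
  obtain ⟨c, hc⟩ := aux_pow_expand N p
  rw [h] at hc
  have key : p • N + N ^ 2 * c = 0 := by linear_combination -hc
  obtain ⟨k, hk⟩ := hN
  have main : ∀ n : ℕ, N ^ (n + 1) = 0 → N = 0 := by
    intro n
    induction n with
    | zero => simpa using id
    | succ m ih =>
      intro hn
      apply ih
      apply htor
      have : (p • N + N ^ 2 * c) * N ^ m = 0 := by rw [key, zero_mul]
      have h2 : p • N ^ (m + 1) + N ^ (m + 2) * c = 0 := by
        rw [← this]; simp [smul_mul_assoc]; ring
      rw [hn, zero_mul, add_zero] at h2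
      exact h2
  cases k with
  | zero => simpa using congrArg (· * N) hk
  | succ k => exact main k hk
end
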